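/- For a quasi-hyperbolic continuous linear cocycle over a compact base, the functions x ↦ dim E^s(x) and x ↦ dim E^u(x) are upper semicontinuous; moreover if a belongs to the α-limit or ω-limit set of x, then dim E^s(a) ≥ dim E^s(x) and dim E^u(a) ≥ dim E^u(x). -/

import Mathlib

open Filter Topology

/-- A continuous linear cocycle (`ℝ`-action by bundle isomorphisms on the
trivial vector bundle `B × E`) over a continuous flow on `B`. -/
structure LinearCocycle (B E : Type*) [TopologicalSpace B]
    [NormedAddCommGroup E] [NormedSpace ℝ E] where
  flow : ℝ → B → B
  flow_cont : Continuous fun p : ℝ × B => flow p.1 p.2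
  flow_zero : ∀ b, flow 0 b = b
  flow_add : ∀ s t b, flow s (flow t b) = flow (s + t) b
  P : ℝ → B → E →L[ℝ] E
  P_cont : Continuous fun p : ℝ × B => P p.1 p.2
  P_zero : ∀ b, P 0 b = ContinuousLinearMap.id ℝ E
  P_comp : ∀ s t b, (P s (flow t b)).comp (P t b) = P (s + t) b

variable {B E : Type*} [TopologicalSpace B]
  [NormedAddCommGroup E] [NormedSpace ℝ E]

/-- Quasi-hyperbolicity: every nonzero vector has unbounded orbit. -/
def LinearCocycle.IsQuasiHyperbolic (Φ : LinearCocycle B E) : Prop :=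
  ∀ b : B, ∀ v : E, v ≠ 0 → ∀ C : ℝ, ∃ t : ℝ, C < ‖Φ.P t b v‖

/-- The subspace of vectors with bounded forward orbit. -/
def LinearCocycle.stable (Φ : LinearCocycle B E) (b : B) : Submodule ℝ E where
  carrier := {v | ∃ C : ℝ, ∀ t > (0:ℝ), ‖Φ.P t b v‖ ≤ C}
  add_mem' := by
    rintro u v ⟨C₁, h₁⟩ ⟨C₂, h₂⟩
    exact ⟨C₁ + C₂, fun t ht => by
      simpa [map_add] using (norm_add_le (Φ.P t b u) (Φ.P t b v)).trans
        (add_le_add (h₁ t ht) (h₂ t ht))⟩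
  zero_mem' := ⟨0, fun t ht => by simp⟩
  smul_mem' := by
    rintro c v ⟨C, h⟩
    exact ⟨‖c‖ * C, fun t ht => by
      rw [map_smul, norm_smul]
      exact mul_le_mul_of_nonneg_left (h t ht) (norm_nonneg c)⟩

/-- The subspace of vectors with bounded backward orbit. -/
def LinearCocycle.unstable (Φ : LinearCocycle B E) (b : B) : Submodule ℝ E where
  carrier := {v | ∃ C : ℝ, ∀ t > (0:ℝ), ‖Φ.P (-t) b v‖ ≤ C}
  add_mem' := by
    rintro u v ⟨C₁, h₁⟩ ⟨C₂, h₂⟩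
    exact ⟨C₁ + C₂, fun t ht => by
      simpa [map_add] using (norm_add_le (Φ.P (-t) b u) (Φ.P (-t) b v)).trans
        (add_le_add (h₁ t ht) (h₂ t ht))⟩
  zero_mem' := ⟨0, fun t ht => by simp⟩
  smul_mem' := by
    rintro c v ⟨C, h⟩
    exact ⟨‖c‖ * C, fun t ht => by
      rw [map_smul, norm_smul]
      exact mul_le_mul_of_nonneg_left (h t ht) (norm_nonneg c)⟩

/-- Uniform hyperbolicity of a linear cocycle over an invariant subset `Λ`. -/
def LinearCocycle.IsHyperbolicOn (Φ : LinearCocycle B E) (Λ : Set B) : Prop :=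
  ∃ Es Eu : B → Submodule ℝ E,
    (∀ t : ℝ, ∀ b ∈ Λ, (Es b).map (Φ.P t b : E →ₗ[ℝ] E) = Es (Φ.flow t b)) ∧
    (∀ t : ℝ, ∀ b ∈ Λ, (Eu b).map (Φ.P t b : E →ₗ[ℝ] E) = Eu (Φ.flow t b)) ∧
    (∀ b ∈ Λ, IsCompl (Es b) (Eu b)) ∧
    ∃ T > (0:ℝ), ∀ b ∈ Λ,
      (∀ v ∈ Es b, v ≠ 0 → ‖Φ.P T b v‖ < (1/2) * ‖v‖) ∧
      (∀ v ∈ Eu b, v ≠ 0 → ‖Φ.P (-T) b v‖ < (1/2) * ‖v‖)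

/-- The `ω`-limit set of `x` under the flow of the cocycle. -/
def LinearCocycle.omegaLimit (Φ : LinearCocycle B E) (x : B) : Set B :=
  {a | MapClusterPt a atTop fun t : ℝ => Φ.flow t x}

/-- The `α`-limit set of `x` under the flow of the cocycle. -/
def LinearCocycle.alphaLimit (Φ : LinearCocycle B E) (x : B) : Set B :=
  {a | MapClusterPt a atBot fun t : ℝ => Φ.flow t x}

/-!
Quasi-hyperbolicity and compactness make forward orbits of stable vectors uniformly bounded:
otherwise, recentring ever longer orbits at a time where they reach half their supremum and
passing to a limit over the compact base yields a unit vector whose whole orbit is bounded.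
With a uniform bound `C`, `E^s(b)` is cut out by the closed conditions `‖Φ(t, b) v‖ ≤ C ‖v‖`
for `t ≥ 0`, so `b ↦ E^s(b)` has closed graph, and the dimension of a family of subspaces with
closed graph is upper semicontinuous. The dimension is constant along orbits, so upper
semicontinuity carries it to limit points. Reversing time exchanges `E^s` and `E^u`.
-/

theorem UpperSemicontinuousAt.le_of_mapClusterPt {β ι : Type*} [LinearOrder β] {f : B → β}
    {a : B} (hf : UpperSemicontinuousAt f a) {l : Filter ι} {m : ι → B}
    (ha : MapClusterPt a l m) {k : β} (hk : ∀ᶠ i in l, k ≤ f (m i)) : k ≤ f a := by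
  by_contra! hlt
  obtain ⟨i, hi, hki⟩ := ((ha.frequently (hf k hlt)).and_eventually hk).exists
  exact (hi.trans_le hki).false

theorem upperSemicontinuous_finrank_of_isClosed {𝕜 V : Type*} [RCLike 𝕜]
    [NormedAddCommGroup V] [NormedSpace 𝕜 V] [FiniteDimensional 𝕜 V] {S : B → Submodule 𝕜 V}
    (hS : IsClosed {p : B × V | p.2 ∈ S p.1}) :
    UpperSemicontinuous fun b => Module.finrank 𝕜 (S b) := by
  have := FiniteDimensional.proper_rclike 𝕜 V
  intro a k hk
  obtain ⟨W, hW⟩ := (S a).exists_isCompl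
  have hK : IsCompact ((W : Set V) ∩ Metric.sphere 0 1) :=
    (isCompact_sphere 0 1).inter_left W.closed_of_finiteDimensional
  -- unit vectors of `W` lie off the closed graph over `a`, hence over all `b` near `a`
  have hoff : ∀ᶠ b in 𝓝 a, ∀ w ∈ (W : Set V) ∩ Metric.sphere 0 1, w ∉ S b := by
    refine hK.eventually_forall_of_forall_eventually fun w ⟨hwW, hw⟩ => ?_
    refine hS.isOpen_compl.mem_nhds fun hwS => ?_
    have hw0 : w = 0 := (Submodule.disjoint_def.mp hW.disjoint) w hwS hwW
    simp [hw0] at hw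
  filter_upwards [hoff] with b hb
  have hdisj : Disjoint (S b) W := by
    refine Submodule.disjoint_def.mpr fun w hwS hwW => by_contra fun hw0 => ?_
    refine hb ((‖w‖⁻¹ : 𝕜) • w) ⟨W.smul_mem _ hwW, ?_⟩ ((S b).smul_mem _ hwS)
    simpa using norm_smul_inv_norm (𝕜 := 𝕜) hw0
  have hsup := Submodule.finrank_sup_add_finrank_inf_eq (S b) W
  have hcompl := Submodule.finrank_add_eq_of_isCompl hW
  have hle := Submodule.finrank_le (S b ⊔ W)
  rw [disjoint_iff.mp hdisj, finrank_bot] at hsup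
  dsimp only at hk
  omega

theorem exists_forall_le_two_mul {α : Type*} {s : Set α} (hs : s.Nonempty) {f : α → ℝ}
    (hf₀ : ∀ x ∈ s, 0 ≤ f x) (hf : BddAbove (f '' s)) : ∃ x ∈ s, ∀ y ∈ s, f y ≤ 2 * f x := by
  obtain ⟨x₀, hx₀⟩ := hs
  have hle : ∀ y ∈ s, f y ≤ sSup (f '' s) := fun y hy => le_csSup hf ⟨y, hy, rfl⟩
  rcases le_or_gt (sSup (f '' s)) 0 with hM | hM
  · exact ⟨x₀, hx₀, fun y hy => (hle y hy).trans (hM.trans (by linarith [hf₀ x₀ hx₀]))⟩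
  · obtain ⟨_, ⟨x, hx, rfl⟩, hlt⟩ :=
      exists_lt_of_lt_csSup (Set.Nonempty.image f ⟨x₀, hx₀⟩) (half_lt_self hM)
    exact ⟨x, hx, fun y hy => by linarith [hle y hy]⟩

namespace LinearCocycle

variable (Φ : LinearCocycle B E)

theorem P_comp_apply (s t : ℝ) (b : B) (v : E) :
    Φ.P s (Φ.flow t b) (Φ.P t b v) = Φ.P (s + t) b v := by
  rw [← Φ.P_comp s t b, ContinuousLinearMap.comp_apply]

theorem P_injective (t : ℝ) (b : B) : Function.Injective (Φ.P t b) :=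
  Function.LeftInverse.injective (g := Φ.P (-t) (Φ.flow t b)) fun v => by
    rw [P_comp_apply, neg_add_cancel, Φ.P_zero, ContinuousLinearMap.id_apply]

theorem continuous_P_apply : Continuous fun q : ℝ × B × E => Φ.P q.1 q.2.1 q.2.2 :=
  (Φ.P_cont.comp (continuous_fst.prodMk (continuous_fst.comp continuous_snd))).clm_apply
    (continuous_snd.comp continuous_snd)

theorem P_apply_mem_stable (t : ℝ) {b : B} {v : E} (hv : v ∈ Φ.stable b) :
    Φ.P t b v ∈ Φ.stable (Φ.flow t b) := by
  obtain ⟨C, hC⟩ := hv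
  obtain ⟨K, hK⟩ := isCompact_Icc.exists_bound_of_continuousOn (s := Set.Icc t 0)
    (Φ.continuous_P_apply.comp (by fun_prop : Continuous fun r : ℝ => (r, b, v))).continuousOn
  refine ⟨max C K, fun s hs => ?_⟩
  rw [P_comp_apply]
  rcases lt_or_ge 0 (s + t) with h | h
  · exact le_max_of_le_left (hC _ h)
  · exact le_max_of_le_right (hK _ ⟨by linarith, h⟩)

theorem finrank_stable_le_flow [FiniteDimensional ℝ E] (t : ℝ) (b : B) :
    Module.finrank ℝ (Φ.stable b) ≤ Module.finrank ℝ (Φ.stable (Φ.flow t b)) :=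
  LinearMap.finrank_le_finrank_of_injective
    (f := (Φ.P t b : E →ₗ[ℝ] E).restrict fun _ => Φ.P_apply_mem_stable t)
    fun _ _ h => Subtype.ext (Φ.P_injective t b (congrArg Subtype.val h))

theorem finrank_stable_flow [FiniteDimensional ℝ E] (t : ℝ) (b : B) :
    Module.finrank ℝ (Φ.stable (Φ.flow t b)) = Module.finrank ℝ (Φ.stable b) := by
  refine le_antisymm ?_ (Φ.finrank_stable_le_flow t b)
  have h := Φ.finrank_stable_le_flow (-t) (Φ.flow t b)
  rwa [Φ.flow_add, neg_add_cancel, Φ.flow_zero] at h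

def reverse : LinearCocycle B E where
  flow t b := Φ.flow (-t) b
  flow_cont := Φ.flow_cont.comp (continuous_neg.prodMap continuous_id)
  flow_zero b := by simpa using Φ.flow_zero b
  flow_add s t b := by simp only [Φ.flow_add, neg_add]
  P t b := Φ.P (-t) b
  P_cont := Φ.P_cont.comp (continuous_neg.prodMap continuous_id)
  P_zero b := by simpa using Φ.P_zero b
  P_comp s t b := by simp only [Φ.P_comp, neg_add]

theorem reverse_flow (t : ℝ) (b : B) : Φ.reverse.flow t b = Φ.flow (-t) b := rfl

theorem stable_reverse (b : B) : Φ.reverse.stable b = Φ.unstable b := rfl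

theorem IsQuasiHyperbolic.reverse {Φ : LinearCocycle B E} (hqh : Φ.IsQuasiHyperbolic) :
    Φ.reverse.IsQuasiHyperbolic := fun b v hv C => by
  obtain ⟨t, ht⟩ := hqh b v hv C
  exact ⟨-t, by simpa [LinearCocycle.reverse] using ht⟩

theorem finrank_unstable_flow [FiniteDimensional ℝ E] (t : ℝ) (b : B) :
    Module.finrank ℝ (Φ.unstable (Φ.flow t b)) = Module.finrank ℝ (Φ.unstable b) := by
  have h := Φ.reverse.finrank_stable_flow (-t) b
  rwa [stable_reverse, stable_reverse, reverse_flow, neg_neg] at h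

theorem exists_norm_eq_one_forall_norm_P_le_two {T K : ℝ}
    (hK : ∀ t ∈ Set.Icc 0 T, ∀ b, ‖Φ.P t b‖ ≤ K) {b : B} {v : E} (hv : v ∈ Φ.stable b)
    {t : ℝ} (ht : 0 ≤ t) (hlt : 2 * K * ‖v‖ < ‖Φ.P t b v‖) :
    ∃ b' w, ‖w‖ = 1 ∧ ∀ r ≥ -T, ‖Φ.P r b' w‖ ≤ 2 := by
  obtain ⟨C, hC⟩ := hv
  have hbdd : BddAbove ((fun r => ‖Φ.P r b v‖) '' Set.Ici 0) := by
    refine ⟨max C ‖v‖, ?_⟩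
    rintro _ ⟨r, hr, rfl⟩
    rcases (Set.mem_Ici.mp hr).eq_or_lt with rfl | hr
    · simp [Φ.P_zero]
    · exact le_max_of_le_left (hC r hr)
  -- recentre the orbit at a time `s` where it reaches half its supremum
  obtain ⟨s, hs, hmax⟩ :=
    exists_forall_le_two_mul Set.nonempty_Ici (fun _ _ => norm_nonneg _) hbdd
  have hTs : T < s := by
    by_contra! hsT
    have hPs : ‖Φ.P s b v‖ ≤ K * ‖v‖ :=
      ((Φ.P s b).le_opNorm v).trans
        (mul_le_mul_of_nonneg_right (hK s ⟨hs, hsT⟩ b) (norm_nonneg v))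
    linarith [hmax t ht]
  have hw : Φ.P s b v ≠ 0 := by
    have hv0 : v ≠ 0 := by rintro rfl; simp at hlt
    simpa using (Φ.P_injective s b).ne hv0
  refine ⟨Φ.flow s b, (‖Φ.P s b v‖⁻¹ : ℝ) • Φ.P s b v, norm_smul_inv_norm hw, fun r hr => ?_⟩
  rw [map_smul, P_comp_apply, norm_smul, norm_inv, norm_norm,
    inv_mul_le_iff₀ (norm_pos_iff.mpr hw)]
  exact (hmax (r + s) (by simp only [Set.mem_Ici]; linarith)).trans_eq (mul_comm _ _)

theorem exists_norm_eq_one_forall_norm_P_le [CompactSpace B] [FiniteDimensional ℝ E] {K : ℝ}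
    (h : ∀ T : ℝ, ∃ b w, ‖w‖ = 1 ∧ ∀ r ≥ -T, ‖Φ.P r b w‖ ≤ K) :
    ∃ a u, ‖u‖ = 1 ∧ ∀ r, ‖Φ.P r a u‖ ≤ K := by
  choose b w hw hbw using h
  obtain ⟨⟨a, u⟩, ⟨-, hu⟩, hcl⟩ :=
    (isCompact_univ.prod (isCompact_sphere (0 : E) 1)).exists_mapClusterPt (f := atTop)
      (u := fun T => (b T, w T)) (by simp [hw])
  refine ⟨a, u, by simpa using hu, fun r => ?_⟩
  have hclosed : IsClosed {p : B × E | ‖Φ.P r p.1 p.2‖ ≤ K} :=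
    isClosed_le (Φ.continuous_P_apply.comp (continuous_const.prodMk continuous_id)).norm
      continuous_const
  exact hclosed.mem_of_mapClusterPt hcl
    ((eventually_ge_atTop (-r)).mono fun T hT => hbw T r (by linarith))

theorem exists_forall_norm_P_le_of_mem_stable [CompactSpace B] [FiniteDimensional ℝ E]
    (hqh : Φ.IsQuasiHyperbolic) :
    ∃ C, ∀ b, ∀ v ∈ Φ.stable b, ∀ t, 0 ≤ t → ‖Φ.P t b v‖ ≤ C * ‖v‖ := by
  by_contra! hunb
  suffices ∃ a u, ‖u‖ = 1 ∧ ∀ r, ‖Φ.P r a u‖ ≤ 2 by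
    obtain ⟨a, u, hu, hbdd⟩ := this
    obtain ⟨r, hr⟩ := hqh a u (norm_ne_zero_iff.mp (by simp [hu])) 2
    exact (hbdd r).not_gt hr
  refine Φ.exists_norm_eq_one_forall_norm_P_le fun T => ?_
  obtain ⟨K, hK⟩ := (isCompact_Icc (a := 0) (b := T)).prod isCompact_univ
    |>.exists_bound_of_continuousOn Φ.P_cont.continuousOn
  obtain ⟨b, v, hv, t, ht, hlt⟩ := hunb (2 * K)
  exact Φ.exists_norm_eq_one_forall_norm_P_le_two (fun t ht b => hK (t, b) ⟨ht, trivial⟩)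
    hv ht hlt

theorem isClosed_setOf_mem_stable [CompactSpace B] [FiniteDimensional ℝ E]
    (hqh : Φ.IsQuasiHyperbolic) : IsClosed {p : B × E | p.2 ∈ Φ.stable p.1} := by
  obtain ⟨C, hC⟩ := Φ.exists_forall_norm_P_le_of_mem_stable hqh
  have hgraph : {p : B × E | p.2 ∈ Φ.stable p.1} =
      ⋂ t ∈ Set.Ici (0 : ℝ), {p | ‖Φ.P t p.1 p.2‖ ≤ C * ‖p.2‖} := by
    ext ⟨b, v⟩
    simp only [Set.mem_iInter, Set.mem_Ici]
    exact ⟨fun hv t ht => hC b v hv t ht, fun h => ⟨C * ‖v‖, fun t ht => h t ht.le⟩⟩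
  rw [hgraph]
  exact isClosed_biInter fun t _ => isClosed_le
    (Φ.continuous_P_apply.comp (continuous_const.prodMk continuous_id)).norm
    (continuous_const.mul continuous_snd.norm)

theorem upperSemicontinuous_finrank_stable [CompactSpace B] [FiniteDimensional ℝ E]
    (hqh : Φ.IsQuasiHyperbolic) :
    UpperSemicontinuous fun x => Module.finrank ℝ (Φ.stable x) :=
  upperSemicontinuous_finrank_of_isClosed (Φ.isClosed_setOf_mem_stable hqh)

theorem le_of_mem_alphaLimit_union_omegaLimit {β : Type*} [LinearOrder β] {f : B → β}
    (hf : UpperSemicontinuous f) {x : B} (hx : ∀ t, f (Φ.flow t x) = f x) {a : B}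
    (ha : a ∈ Φ.alphaLimit x ∪ Φ.omegaLimit x) : f x ≤ f a := by
  rcases ha with ha | ha <;>
    exact UpperSemicontinuousAt.le_of_mapClusterPt (hf a) ha (.of_forall fun t => (hx t).ge)

end LinearCocycle

/-- For a quasi-hyperbolic continuous linear cocycle over a compact base the
functions `x ↦ dim E^s(x)` and `x ↦ dim E^u(x)` are upper semicontinuous, and
they do not decrease when passing to points of `α(x) ∪ ω(x)`. -/
theorem stable_dimension_semicontinuity
    [CompactSpace B] [FiniteDimensional ℝ E]
    (Φ : LinearCocycle B E) (hqh : Φ.IsQuasiHyperbolic) :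
    UpperSemicontinuous (fun x : B => Module.finrank ℝ (Φ.stable x)) ∧
    UpperSemicontinuous (fun x : B => Module.finrank ℝ (Φ.unstable x)) ∧
    (∀ x : B, ∀ a ∈ Φ.alphaLimit x ∪ Φ.omegaLimit x,
      Module.finrank ℝ (Φ.stable x) ≤ Module.finrank ℝ (Φ.stable a) ∧
      Module.finrank ℝ (Φ.unstable x) ≤ Module.finrank ℝ (Φ.unstable a)) := by
  have hs := Φ.upperSemicontinuous_finrank_stable hqh
  have hu : UpperSemicontinuous fun x => Module.finrank ℝ (Φ.unstable x) :=
    Φ.reverse.upperSemicontinuous_finrank_stable hqh.reverse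
  exact ⟨hs, hu, fun x a ha =>
    ⟨Φ.le_of_mem_alphaLimit_union_omegaLimit hs (Φ.finrank_stable_flow · x) ha,
      Φ.le_of_mem_alphaLimit_union_omegaLimit hu (Φ.finrank_unstable_flow · x) ha⟩⟩
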